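/- arXiv:1902.07803 — 2 statements merged into one kernel-verified Lean document; each statement's English description precedes it below -/
import Mathlib

section
/- Assume 2g − 2 + n > 0. The forgetful maps SP⁺_{g,n} → C_{g,n} (sending (G,P,s) to (G,P)) and SP⁺_{g,n} → S_{g,n} (sending (G,P,s) to G) are quotients of posets for every g, and for g > 0 the forgetful map SP⁻_{g,n} → S_{g,n} is a quotient of posets. -/
/-!
Common combinatorial preliminaries: weighted graphs with legs, contractions,
spin structures, following Caporaso–Melo–Pacini, "Tropicalizing the moduli
space of spin curves".
-/

attribute [local instance] Classical.propDecidable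

noncomputable section

/-- A weighted graph with legs.  Edges are recorded as elements of a finite
type `E` together with their (unordered) pair of endpoints `ends e : Sym2 V`
(a loop corresponds to a diagonal pair); legs are elements of a finite type
`Lg` with an endpoint map `legEnd`; `w` is the weight function. -/
structure LegGraph : Type 1 where
  V : Type
  E : Type
  Lg : Type
  fV : Fintype V
  fE : Fintype E
  fL : Fintype Lg
  dV : DecidableEq V
  dE : DecidableEq E
  dL : DecidableEq Lg
  neV : Nonempty V
  ends : E → Sym2 V
  legEnd : Lg → V
  w : V → ℕ

attribute [instance] LegGraph.fV LegGraph.fE LegGraph.fL LegGraph.dV LegGraph.dE LegGraph.dL LegGraph.neV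

namespace LegGraph

variable (G : LegGraph)

/-- The multiplicity of the vertex `v` in the edge `e` (`2` for a loop at `v`). -/
def degMul (v : G.V) (e : G.E) : ℕ :=
  Sym2.lift ⟨fun a b => (if a = v then 1 else 0) + (if b = v then 1 else 0),
    fun _ _ => add_comm _ _⟩ (G.ends e)

/-- The degree of a vertex: number of non-leg half-edges ending at it. -/
def deg (v : G.V) : ℕ := ∑ e, G.degMul v e

/-- The number of legs ending at a vertex. -/
def legsAt (v : G.V) : ℕ := (Finset.univ.filter fun l => G.legEnd l = v).card

/-- The number of loops based at a vertex. -/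
def loops (v : G.V) : ℕ := (Finset.univ.filter fun e => G.ends e = Sym2.diag v).card

/-- The boundary map `∂ : E_G → V_G` over `F₂`, sending an edge to the sum of
its two endpoints. -/
def boundary : (G.E → ZMod 2) →ₗ[ZMod 2] (G.V → ZMod 2) where
  toFun x := fun v => ∑ e, x e * (G.degMul v e : ZMod 2)
  map_add' x y := by
    funext v
    simp [add_mul, Finset.sum_add_distrib]
  map_smul' c x := by
    funext v
    simp [Finset.mul_sum, mul_assoc]

/-- The `F₂`-indicator vector of a set of edges. -/
def indicator (P : Finset G.E) : G.E → ZMod 2 := fun e => if e ∈ P then 1 else 0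

/-- A subset of edges is cyclic if it lies in the cycle space `C_G = ker ∂`,
i.e. its indicator vector is killed by the boundary map. -/
def IsCyclic (P : Finset G.E) : Prop := G.boundary (G.indicator P) = 0

/-- Adjacency through an edge belonging to `P`. -/
def PAdj (P : Finset G.E) (u v : G.V) : Prop :=
  ∃ e ∈ P, u ∈ G.ends e ∧ v ∈ G.ends e

/-- The vertex set of the contraction `G/P`: connected components of `(V, P)`. -/
def CompV (P : Finset G.E) : Type := Quot (G.PAdj P)

instance (P : Finset G.E) : Finite (G.CompV P) := Quot.finite _
instance (P : Finset G.E) : Fintype (G.CompV P) := Fintype.ofFinite _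
instance (P : Finset G.E) : Nonempty (G.CompV P) := G.neV.map (Quot.mk _)

/-- The set of vertices of `G` lying in a given component. -/
def fiberV (P : Finset G.E) (x : G.CompV P) : Finset G.V :=
  Finset.univ.filter fun v => Quot.mk (G.PAdj P) v = x

/-- The set of edges of `P` lying in a given component. -/
def fiberE (P : Finset G.E) (x : G.CompV P) : Finset G.E :=
  P.filter fun e => ∀ v ∈ G.ends e, Quot.mk (G.PAdj P) v = x

/-- The weight of a vertex `x` of `G/P`: the genus of its preimage, i.e. the
sum of the weights of the vertices in the component plus its first Betti
number `#edges - #vertices + 1`. -/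
def quotWeight (P : Finset G.E) (x : G.CompV P) : ℕ :=
  (∑ v ∈ G.fiberV P x, G.w v) + ((G.fiberE P x).card + 1 - (G.fiberV P x).card)

/-- Connectedness of the graph. -/
def Connected : Prop := ∀ u v : G.V, Relation.EqvGen (G.PAdj Finset.univ) u v

/-- The number of connected components `c(G)`. -/
def numComp : ℕ := Nat.card (G.CompV Finset.univ)

/-- The first Betti number `b₁(G) = |E| - |V| + c(G)`. -/
def b1 : ℕ := Fintype.card G.E + G.numComp - Fintype.card G.V

/-- The genus `g(G) = Σ_v w(v) + b₁(G)`. -/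
def genus : ℕ := (∑ v, G.w v) + G.b1

/-- The number of legs. -/
def numLegs : ℕ := Fintype.card G.Lg

/-- Stability: connected and `2w(v) - 2 + deg(v) + ℓ(v) > 0` at every vertex. -/
def Stable : Prop :=
  G.Connected ∧ ∀ v : G.V, 2 < 2 * G.w v + G.deg v + G.legsAt v

/-- `G` is Eulerian (cyclic) if every vertex has even degree, i.e. the set of
all edges lies in the cycle space. -/
def Eulerian : Prop := G.IsCyclic Finset.univ

/-- A basic graph: a stable cyclic (Eulerian) graph of genus `≥ 2` with at
least one edge, all weights `≤ 1`, and `w(v) + deg(v) + ℓ(v) ≤ 4` at every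
vertex with equality only if there is a loop at `v`. -/
def IsBasic : Prop :=
  G.Stable ∧ 2 ≤ G.genus ∧ Nonempty G.E ∧ G.Eulerian ∧
  (∀ v, G.w v ≤ 1) ∧
  (∀ v, G.w v + G.deg v + G.legsAt v ≤ 4) ∧
  (∀ v, G.w v + G.deg v + G.legsAt v = 4 → 1 ≤ G.loops v)

/-- `c⁺`: the number of vertices of `G/P` of positive weight, i.e. the number
of connected components of `P̄` of positive genus. -/
def cPlus (P : Finset G.E) : ℕ :=
  (Finset.univ.filter fun x : G.CompV P => 0 < G.quotWeight P x).card

/-- The contracted graph `G/P`. -/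
def contract (P : Finset G.E) : LegGraph where
  V := G.CompV P
  E := {e : G.E // e ∉ P}
  Lg := G.Lg
  fV := inferInstance
  fE := inferInstance
  fL := G.fL
  dV := Classical.decEq _
  dE := inferInstance
  dL := G.dL
  neV := inferInstance
  ends := fun e => (G.ends e.1).map (Quot.mk (G.PAdj P))
  legEnd := fun l => Quot.mk (G.PAdj P) (G.legEnd l)
  w := G.quotWeight P

/-- An ordered pair of endpoints of an edge. -/
def endPair (e : G.E) : G.V × G.V := Classical.choose (Quot.exists_rep (G.ends e))

end LegGraph

/-- A spin structure on a graph `G`: a cyclic subset `P` of edges and a sign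
function on the vertices of `G/P` vanishing at all vertices of weight `0`. -/
structure SpinStructure (G : LegGraph) where
  P : Finset G.E
  cyclic : G.IsCyclic P
  s : G.CompV P → ZMod 2
  vanish : ∀ x, G.quotWeight P x = 0 → s x = 0

/-- The parity of a spin structure: the parity of `Σ_{v ∈ V(G/P)} s(v)`. -/
def SpinStructure.parity {G : LegGraph} (σ : SpinStructure G) : ZMod 2 := ∑ x, σ.s x

/-- A contraction of graphs `γ : G → G' = G/F`: the edges of `G'` are
identified with `E(G) ∖ F`, the legs of `G'` with those of `G`; the vertex
map is surjective, its fibers are exactly the connected components of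
`(V(G), F)`, endpoints and legs are compatible, and the weight of a vertex of
`G'` is the genus of its preimage. -/
structure Contraction (G G' : LegGraph) where
  F : Finset G.E
  vMap : G.V → G'.V
  eEquiv : G'.E ≃ {e : G.E // e ∉ F}
  lEquiv : G'.Lg ≃ G.Lg
  vSurj : Function.Surjective vMap
  ends_compat : ∀ e' : G'.E, G'.ends e' = (G.ends (eEquiv e').1).map vMap
  leg_compat : ∀ l' : G'.Lg, G'.legEnd l' = vMap (G.legEnd (lEquiv l'))
  collapse : ∀ e ∈ F, ∀ u ∈ G.ends e, ∀ v ∈ G.ends e, vMap u = vMap v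
  fiber_conn : ∀ u v : G.V, vMap u = vMap v → Relation.EqvGen (G.PAdj F) u v
  w_compat : ∀ v' : G'.V,
    G'.w v' = (∑ v ∈ Finset.univ.filter (fun v => vMap v = v'), G.w v)
      + (((F.filter fun e => ∀ u ∈ G.ends e, vMap u = v').card + 1)
          - (Finset.univ.filter fun v => vMap v = v').card)

namespace Contraction

variable {G G' : LegGraph} (γ : Contraction G G')

/-- The induced map `γ^E_* : E_G → E_{G'}` (γ^E_*(e) = e if e ∉ F, 0 else). -/
def eStar : (G.E → ZMod 2) →ₗ[ZMod 2] (G'.E → ZMod 2) where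
  toFun x := fun e' => x (γ.eEquiv e').1
  map_add' _ _ := rfl
  map_smul' _ _ := rfl

/-- The induced map `γ^V_* : V_G → V_{G'}`. -/
def vStar : (G.V → ZMod 2) →ₗ[ZMod 2] (G'.V → ZMod 2) where
  toFun x := fun v' => ∑ v ∈ Finset.univ.filter (fun v => γ.vMap v = v'), x v
  map_add' x y := by
    funext v'
    simp [Finset.sum_add_distrib]
  map_smul' c x := by
    funext v'
    simp [Finset.mul_sum]

/-- The pushforward `γ_* P = P ∖ F` of a set of edges, as a subset of `E(G')`. -/
def pushE (P : Finset G.E) : Finset G'.E :=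
  Finset.univ.filter fun e' => (γ.eEquiv e' : {e : G.E // e ∉ γ.F}).1 ∈ P

/-- The graph of the induced map `γ̄ : V(G/P) → V(G'/P')` on components. -/
def compMapsTo (P : Finset G.E) (P' : Finset G'.E)
    (x : G.CompV P) (x' : G'.CompV P') : Prop :=
  ∃ v : G.V, Quot.mk (G.PAdj P) v = x ∧ Quot.mk (G'.PAdj P') (γ.vMap v) = x'

/-- The pushforward sign function: `s'(v') = Σ_{v ∈ γ̄⁻¹(v')} s(v)`. -/
def pushS (P : Finset G.E) (s : G.CompV P → ZMod 2) :
    G'.CompV (γ.pushE P) → ZMod 2 :=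
  fun x' => ∑ x ∈ Finset.univ.filter
    (fun x => γ.compMapsTo P (γ.pushE P) x x'), s x

/-- `γ_* σ = σ'` for spin structures. -/
def SpinMapsTo (σ : SpinStructure G) (σ' : SpinStructure G') : Prop :=
  σ'.P = γ.pushE σ.P ∧ HEq σ'.s (γ.pushS σ.P σ.s)

end Contraction

/-- An automorphism of a graph: weight-preserving bijection on vertices,
bijection on edges compatible with endpoints, fixing every leg. -/
structure GraphAut (G : LegGraph) where
  vE : G.V ≃ G.V
  eE : G.E ≃ G.E
  ends_compat : ∀ e, G.ends (eE e) = (G.ends e).map vE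
  w_compat : ∀ v, G.w (vE v) = G.w v
  leg_fix : ∀ l, G.legEnd l = vE (G.legEnd l)

namespace GraphAut

variable {G : LegGraph}

/-- Composition of automorphisms (`α.comp β` acts by `β` first, then `α`). -/
def comp (α β : GraphAut G) : GraphAut G where
  vE := β.vE.trans α.vE
  eE := β.eE.trans α.eE
  ends_compat e := by
    simp only [Equiv.trans_apply, Equiv.coe_trans]
    rw [α.ends_compat, β.ends_compat, Sym2.map_map]
  w_compat v := by
    simp only [Equiv.trans_apply]
    rw [α.w_compat, β.w_compat]
  leg_fix l := by
    simp only [Equiv.trans_apply]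
    rw [← β.leg_fix, ← α.leg_fix]

/-- `α_* σ = σ'` for an automorphism `α` and spin structures `σ, σ'`. -/
def SpinMapsTo (α : GraphAut G) (σ σ' : SpinStructure G) : Prop :=
  σ'.P = σ.P.image α.eE ∧
  ∀ v : G.V, σ'.s (Quot.mk (G.PAdj σ'.P) (α.vE v)) = σ.s (Quot.mk (G.PAdj σ.P) v)

/-- `α` preserves the spin structure `σ`, i.e. `α_*(P,s) = (P,s)`. -/
def PreservesSpin (α : GraphAut G) (σ : SpinStructure G) : Prop :=
  α.SpinMapsTo σ σ

end GraphAut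

/-- The graph `P̄ = G - R°` where `R = E ∖ P`: same vertices, edges `P`, and
the legs of `G` together with a pair of new legs for each edge of `R`, placed
at its two endpoints. -/
def LegGraph.legify (G : LegGraph) (P : Finset G.E) : LegGraph where
  V := G.V
  E := {e : G.E // e ∈ P}
  Lg := G.Lg ⊕ ({e : G.E // e ∉ P} × Bool)
  fV := G.fV
  fE := inferInstance
  fL := inferInstance
  dV := G.dV
  dE := inferInstance
  dL := inferInstance
  neV := G.neV
  ends := fun e => G.ends e.1
  legEnd := fun l =>
    match l with
    | Sum.inl l => G.legEnd l
    | Sum.inr (e, b) => if b then (G.endPair e.1).1 else (G.endPair e.1).2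
  w := G.w

/-- `G` is a stable graph of genus `g` with `n` legs. -/
def StG (g n : ℕ) (G : LegGraph) : Prop := G.Stable ∧ G.genus = g ∧ G.numLegs = n

/-- Objects of the poset `C_{g,n}` before taking isomorphism classes. -/
def CycObj : Type 1 := Σ G : LegGraph, Finset G.E

/-- Objects of the poset `SP_{g,n}` before taking isomorphism classes. -/
def SpinObj : Type 1 := Σ G : LegGraph, SpinStructure G

/-- Order on graphs: `G ≥ G'` iff there is a contraction `G → G'`. -/
def GraphGe (G G' : LegGraph) : Prop := Nonempty (Contraction G G')

/-- Order on `C_{g,n}`: `(G,P) ≥ (G',P')` iff some contraction pushes `P` to `P'`. -/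
def CycGe (a b : CycObj) : Prop := ∃ γ : Contraction a.1 b.1, γ.pushE a.2 = b.2

/-- Order on `SP_{g,n}`: `(G,P,s) ≥ (G',P',s')` iff some contraction pushes
`(P,s)` to `(P',s')`. -/
def SpinGe (a b : SpinObj) : Prop := ∃ γ : Contraction a.1 b.1, γ.SpinMapsTo a.2 b.2

/-- `q : X → Y` is a quotient of posets (for the `≥`-relations `geA`, `geB`):
it is surjective, order-preserving, and any relation downstairs lifts. -/
def IsPosetQuotient {α : Sort*} {β : Sort*}
    (geA : α → α → Prop) (geB : β → β → Prop) (q : α → β) : Prop :=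
  Function.Surjective q ∧
  (∀ a a', geA a a' → geB (q a) (q a')) ∧
  (∀ b b', geB b b' → ∃ a a', q a = b ∧ q a' = b' ∧ geA a a')

/-- Strict order `x > y` associated to a `≥`-relation. -/
def StrictGt {α : Sort*} (ge : α → α → Prop) (x y : α) : Prop := ge x y ∧ ¬ ge y x

/-- `x` covers `y`. -/
def Covers {α : Sort*} (ge : α → α → Prop) (x y : α) : Prop :=
  StrictGt ge x y ∧ ¬ ∃ z, StrictGt ge x z ∧ StrictGt ge z y

/-- `ρ` is a rank function for the `≥`-relation `ge`. -/
def IsRankFn {α : Sort*} (ge : α → α → Prop) (ρ : α → ℕ) : Prop :=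
  (∀ x y, StrictGt ge x y → ρ y < ρ x) ∧
  (∀ x y, Covers ge x y → ρ x = ρ y + 1)

/-!
Even spin structures `(P, 0)` exist on every cyclic `P` and push forward along
every contraction; this gives the two quotient maps from `SP⁺`. For `SP⁻`, take
a cyclic `P` with a component `x` of positive genus (from a vertex of positive
weight, or from a nonempty cycle, which exists as soon as `b₁ > 0`) and the
sign `δ_x`. Its pushforward is `δ_{γ̄ x}`, a spin structure because the genus of
a component never drops under contraction. This monotonicity rests on the
dimension `|Q| - |V| + c(Q)` of the cycle space of a subgraph `(V, Q)`: a
connected graph containing a cycle has at least as many edges as vertices.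
-/

open Finset

namespace LegGraph

variable (G : LegGraph)

lemma exists_ends_eq (e : G.E) : ∃ a b : G.V, G.ends e = s(a, b) := by
  obtain ⟨⟨a, b⟩, h⟩ := Quot.exists_rep (G.ends e)
  exact ⟨a, b, h.symm⟩

lemma degMul_of_ends_eq {a b : G.V} {e : G.E} (h : G.ends e = s(a, b)) (v : G.V) :
    G.degMul v e = (if a = v then 1 else 0) + (if b = v then 1 else 0) := by
  rw [degMul, h, Sym2.lift_mk]

lemma degMul_eq_zero {v : G.V} {e : G.E} (h : v ∉ G.ends e) : G.degMul v e = 0 := by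
  obtain ⟨a, b, hab⟩ := G.exists_ends_eq e
  rw [hab, Sym2.mem_iff, not_or] at h
  rw [G.degMul_of_ends_eq hab, if_neg (Ne.symm h.1), if_neg (Ne.symm h.2)]

lemma sum_degMul_of_ends_eq {a b : G.V} {e : G.E} (h : G.ends e = s(a, b)) (S : Finset G.V) :
    ∑ v ∈ S, (G.degMul v e : ZMod 2) = (if a ∈ S then 1 else 0) + (if b ∈ S then 1 else 0) := by
  simp_rw [G.degMul_of_ends_eq h]
  push_cast
  rw [sum_add_distrib, sum_ite_eq, sum_ite_eq]

lemma sum_degMul_eq_zero {e : G.E} {S : Finset G.V}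
    (hS : ∀ u ∈ G.ends e, ∀ v ∈ G.ends e, u ∈ S → v ∈ S) :
    ∑ v ∈ S, (G.degMul v e : ZMod 2) = 0 := by
  obtain ⟨a, b, hab⟩ := G.exists_ends_eq e
  have ha : a ∈ G.ends e := hab ▸ Sym2.mem_mk_left a b
  have hb : b ∈ G.ends e := hab ▸ Sym2.mem_mk_right a b
  rw [G.sum_degMul_of_ends_eq hab]
  by_cases haS : a ∈ S
  · rw [if_pos haS, if_pos (hS a ha b hb haS)]
    decide
  · rw [if_neg haS, if_neg fun hbS => haS (hS b hb a ha hbS), add_zero]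

lemma boundary_indicator_apply (P : Finset G.E) (v : G.V) :
    G.boundary (G.indicator P) v = ∑ e ∈ P, (G.degMul v e : ZMod 2) := by
  simp only [boundary, indicator, LinearMap.coe_mk, AddHom.coe_mk, ite_mul, one_mul, zero_mul]
  rw [← sum_filter, filter_mem_eq_inter, univ_inter]

lemma isCyclic_iff (P : Finset G.E) :
    G.IsCyclic P ↔ ∀ v, ∑ e ∈ P, (G.degMul v e : ZMod 2) = 0 := by
  simp only [IsCyclic, funext_iff, boundary_indicator_apply, Pi.zero_apply]

lemma isCyclic_empty : G.IsCyclic ∅ := by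
  simp [isCyclic_iff]

lemma mk_eq_of_mem_ends {Q : Finset G.E} {e : G.E} (he : e ∈ Q) {u v : G.V}
    (hu : u ∈ G.ends e) (hv : v ∈ G.ends e) :
    Quot.mk (G.PAdj Q) u = Quot.mk (G.PAdj Q) v :=
  Quot.sound ⟨e, he, hu, hv⟩

lemma mem_fiberV {Q : Finset G.E} {x : G.CompV Q} {v : G.V} :
    v ∈ G.fiberV Q x ↔ Quot.mk (G.PAdj Q) v = x := by
  simp [fiberV]

lemma mem_fiberE {Q : Finset G.E} {x : G.CompV Q} {e : G.E} :
    e ∈ G.fiberE Q x ↔ e ∈ Q ∧ ∀ v ∈ G.ends e, Quot.mk (G.PAdj Q) v = x := by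
  simp [fiberE]

lemma mem_fiberE_of_mem_ends {Q : Finset G.E} {e : G.E} (he : e ∈ Q) {v : G.V}
    (hv : v ∈ G.ends e) : e ∈ G.fiberE Q (Quot.mk (G.PAdj Q) v) :=
  G.mem_fiberE.2 ⟨he, fun _ hu => G.mk_eq_of_mem_ends he hu hv⟩

def boundaryOn (Q : Finset G.E) : (Q → ZMod 2) →ₗ[ZMod 2] (G.V → ZMod 2) where
  toFun y v := ∑ e : Q, y e * (G.degMul v e : ZMod 2)
  map_add' y z := by funext v; simp [add_mul, sum_add_distrib]
  map_smul' c y := by funext v; simp [mul_sum, mul_assoc]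

def componentSum (Q : Finset G.E) : (G.V → ZMod 2) →ₗ[ZMod 2] (G.CompV Q → ZMod 2) where
  toFun f x := ∑ v ∈ G.fiberV Q x, f v
  map_add' f f' := by funext x; simp [sum_add_distrib]
  map_smul' c f := by funext x; simp [mul_sum]

lemma boundaryOn_apply (Q : Finset G.E) (y : Q → ZMod 2) (v : G.V) :
    G.boundaryOn Q y v = ∑ e : Q, y e * (G.degMul v e : ZMod 2) := rfl

lemma componentSum_apply (Q : Finset G.E) (f : G.V → ZMod 2) (x : G.CompV Q) :
    G.componentSum Q f x = ∑ v ∈ G.fiberV Q x, f v := rfl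

lemma componentSum_surjective (Q : Finset G.E) : Function.Surjective (G.componentSum Q) := by
  intro f
  refine ⟨fun v => ∑ x, (Pi.single x.out (f x) : G.V → ZMod 2) v, funext fun x => ?_⟩
  rw [componentSum_apply, sum_comm, Fintype.sum_eq_single x fun x' hx' => ?_]
  · rw [sum_pi_single', if_pos (G.mem_fiberV.2 (Quot.out_eq x))]
  · rw [sum_pi_single', if_neg]
    rw [G.mem_fiberV]
    exact fun h => hx' ((Quot.out_eq x').symm.trans h)

lemma range_boundaryOn_le (Q : Finset G.E) :
    LinearMap.range (G.boundaryOn Q) ≤ LinearMap.ker (G.componentSum Q) := by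
  rintro _ ⟨y, rfl⟩
  refine LinearMap.mem_ker.2 (funext fun x => ?_)
  rw [componentSum_apply, Pi.zero_apply]
  simp_rw [boundaryOn_apply]
  rw [sum_comm]
  refine sum_eq_zero fun e _ => ?_
  rw [← mul_sum, G.sum_degMul_eq_zero fun u hu v hv huS => ?_, mul_zero]
  rw [G.mem_fiberV] at huS ⊢
  rw [← huS, G.mk_eq_of_mem_ends e.2 hv hu]

lemma boundaryOn_single_of_ends_eq (Q : Finset G.E) {e : Q} {a b : G.V}
    (h : G.ends e = s(a, b)) :
    G.boundaryOn Q (Pi.single e 1) = Pi.single a 1 + Pi.single b 1 := by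
  funext v
  rw [boundaryOn_apply, Fintype.sum_eq_single e fun e' he' => by simp [he'],
    Pi.single_eq_same, one_mul, G.degMul_of_ends_eq h]
  simp [Pi.single_apply, eq_comm]

lemma single_add_single_mem_range {Q : Finset G.E} {u v : G.V}
    (h : Quot.mk (G.PAdj Q) u = Quot.mk (G.PAdj Q) v) :
    Pi.single u 1 + Pi.single v 1 ∈ LinearMap.range (G.boundaryOn Q) := by
  have two : ∀ w : G.V, (Pi.single w 1 + Pi.single w 1 : G.V → ZMod 2) = 0 := fun w => by
    rw [← two_smul (ZMod 2), show (2 : ZMod 2) = 0 from rfl, zero_smul]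
  have hpath := Quot.eqvGen_exact h
  clear h
  induction hpath with
  | rel a b hab =>
    obtain ⟨e, he, ha, hb⟩ := hab
    obtain ⟨p, q, hpq⟩ := G.exists_ends_eq e
    rw [hpq, Sym2.mem_iff] at ha hb
    have hrange := LinearMap.mem_range_self (G.boundaryOn Q) (Pi.single ⟨e, he⟩ 1)
    rw [G.boundaryOn_single_of_ends_eq Q hpq] at hrange
    rcases ha with rfl | rfl <;> rcases hb with rfl | rfl
    all_goals first
      | (rw [two]; exact zero_mem _)
      | exact hrange
      | (rw [add_comm]; exact hrange)
  | refl a => rw [two]; exact zero_mem _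
  | symm a b _ ih => rw [add_comm]; exact ih
  | trans a b c _ _ ih₁ ih₂ =>
    have := add_mem ih₁ ih₂
    rwa [add_assoc, ← add_assoc (Pi.single b 1), two, zero_add] at this

lemma ker_componentSum_le (Q : Finset G.E) :
    LinearMap.ker (G.componentSum Q) ≤ LinearMap.range (G.boundaryOn Q) := by
  intro f hf
  -- `f = Σ_v f(v) (δ_v + δ_{r v}) + Σ_v f(v) δ_{r v}`, `r v` the representative of the class
  -- of `v`: the first sum is a boundary, the second vanishes as `f` sums to zero on each class.
  set r : G.V → G.V := fun v => (Quot.mk (G.PAdj Q) v).out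
  have hrest : ∑ v, f v • (Pi.single (r v) 1 : G.V → ZMod 2) = 0 := by
    rw [← sum_fiberwise (κ := G.CompV Q) univ (Quot.mk (G.PAdj Q))]
    refine sum_eq_zero fun x _ => ?_
    rw [sum_congr rfl fun v hv => by rw [show r v = x.out from congrArg Quot.out (mem_filter.1 hv).2],
      ← sum_smul]
    convert zero_smul (ZMod 2) _
    convert congrFun (LinearMap.mem_ker.1 hf) x
    · rw [componentSum_apply, fiberV]
      congr
    · rfl
  have hf_eq : f = ∑ v, f v • (Pi.single v 1 + Pi.single (r v) 1) := by
    simp_rw [smul_add, sum_add_distrib, hrest, add_zero]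
    ext w
    simp [Pi.single_apply]
  rw [hf_eq]
  exact sum_mem fun v _ => Submodule.smul_mem _ _
    (G.single_add_single_mem_range (Quot.out_eq _).symm)

lemma finrank_ker_boundaryOn_add (Q : Finset G.E) :
    Module.finrank (ZMod 2) (LinearMap.ker (G.boundaryOn Q)) + Fintype.card G.V
      = Q.card + Nat.card (G.CompV Q) := by
  have hb := LinearMap.finrank_range_add_finrank_ker (G.boundaryOn Q)
  have hc := LinearMap.finrank_range_add_finrank_ker (G.componentSum Q)
  rw [le_antisymm (G.range_boundaryOn_le Q) (G.ker_componentSum_le Q)] at hb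
  rw [LinearMap.range_eq_top.2 (G.componentSum_surjective Q), finrank_top] at hc
  simp only [Module.finrank_fintype_fun_eq_card, Fintype.card_coe, Nat.card_eq_fintype_card]
    at hb hc ⊢
  omega

lemma boundaryOn_indicator {Q C : Finset G.E} (hCQ : C ⊆ Q) :
    G.boundaryOn Q (fun e => G.indicator C e) = G.boundary (G.indicator C) := by
  funext v
  rw [boundaryOn_apply, boundary_indicator_apply,
    sum_coe_sort Q fun e => G.indicator C e * (G.degMul v e : ZMod 2)]
  simp only [indicator, ite_mul, one_mul, zero_mul]
  rw [← sum_filter, filter_mem_eq_inter, inter_eq_right.2 hCQ]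

lemma exists_isCyclic_iff (Q : Finset G.E) :
    (∃ C ⊆ Q, C.Nonempty ∧ G.IsCyclic C) ↔ Fintype.card G.V < Q.card + Nat.card (G.CompV Q) := by
  rw [← G.finrank_ker_boundaryOn_add Q, Nat.lt_add_left_iff_pos,
    Module.finrank_pos_iff_exists_ne_zero]
  constructor
  · rintro ⟨C, hCQ, ⟨e, he⟩, hC⟩
    refine ⟨⟨_, LinearMap.mem_ker.2 ((G.boundaryOn_indicator hCQ).trans hC)⟩, fun h0 => ?_⟩
    have := congrFun (congrArg Subtype.val h0) ⟨e, hCQ he⟩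
    simp [indicator, he] at this
  · rintro ⟨⟨y, hy⟩, hy0⟩
    set C : Finset G.E := (univ.filter fun e => y e ≠ 0).map (Function.Embedding.subtype _)
    have hCQ : C ⊆ Q := fun e he => by
      obtain ⟨e', -, rfl⟩ := mem_map.1 he
      exact e'.2
    have hyC : (fun e : Q => G.indicator C e) = y := funext fun e => by
      have h01 : ∀ t : ZMod 2, t ≠ 0 → t = 1 := by decide
      by_cases he : y e = 0 <;> simp [C, indicator, he, h01]
    refine ⟨C, hCQ, ?_, ?_⟩
    · obtain ⟨e, he⟩ := Function.ne_iff.1 (fun h => hy0 (Subtype.ext h))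
      exact ⟨e, mem_map.2 ⟨e, by simpa using he, rfl⟩⟩
    · rw [IsCyclic, ← G.boundaryOn_indicator hCQ, hyC]
      exact hy

lemma eqvGen_of_closed {Q Q' : Finset G.E} {W : Finset G.V}
    (hW : ∀ e ∈ Q, ∀ u ∈ G.ends e, ∀ v ∈ G.ends e, u ∈ W → v ∈ W)
    (hQ' : ∀ e ∈ Q, (∀ v ∈ G.ends e, v ∈ W) → e ∈ Q') {u v : G.V}
    (h : Relation.EqvGen (G.PAdj Q) u v) (hu : u ∈ W) : Relation.EqvGen (G.PAdj Q') u v := by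
  suffices (u ∈ W ↔ v ∈ W) ∧ (u ∈ W → Relation.EqvGen (G.PAdj Q') u v) from this.2 hu
  clear hu
  induction h with
  | rel a b hab =>
    obtain ⟨e, he, ha, hb⟩ := hab
    exact ⟨⟨hW e he a ha b hb, hW e he b hb a ha⟩, fun haW =>
      .rel a b ⟨e, hQ' e he fun w hw => hW e he a ha w hw haW, ha, hb⟩⟩
  | refl a => exact ⟨Iff.rfl, fun _ => .refl a⟩
  | symm a b _ ih => exact ⟨ih.1.symm, fun hb => .symm _ _ (ih.2 (ih.1.2 hb))⟩
  | trans a b c _ _ ih₁ ih₂ =>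
    exact ⟨ih₁.1.trans ih₂.1, fun ha => .trans _ _ _ (ih₁.2 ha) (ih₂.2 (ih₁.1.1 ha))⟩

/-- The components of `(V, Q)` are `W` and the singletons outside `W`. -/
lemma card_compV_le {Q : Finset G.E} {W : Finset G.V} (hQ : ∀ e ∈ Q, ∀ v ∈ G.ends e, v ∈ W)
    (hconn : ∀ u ∈ W, ∀ v ∈ W, Relation.EqvGen (G.PAdj Q) u v) :
    Nat.card (G.CompV Q) ≤ Fintype.card G.V - W.card + 1 := by
  let φ : G.V → Option {v // v ∉ W} := fun v => if h : v ∈ W then none else some ⟨v, h⟩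
  have hφ : ∀ u v, G.PAdj Q u v → φ u = φ v := by
    rintro u v ⟨e, he, hu, hv⟩
    simp [φ, hQ e he u hu, hQ e he v hv]
  have hinj : Function.Injective (Quot.lift φ hφ : G.CompV Q → _) := by
    rintro ⟨u⟩ ⟨v⟩ huv
    change φ u = φ v at huv
    by_cases hu : u ∈ W <;> by_cases hv : v ∈ W <;> simp [φ, hu, hv] at huv
    · exact Quot.eqvGen_sound (hconn u hu v hv)
    · rw [huv]
  have := Nat.card_le_card_of_injective _ hinj
  rwa [Nat.card_eq_fintype_card (α := Option _), Fintype.card_option,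
    Fintype.card_subtype_compl, Fintype.card_coe] at this

lemma card_le_card_of_isCyclic {Q C : Finset G.E} {W : Finset G.V}
    (hQ : ∀ e ∈ Q, ∀ v ∈ G.ends e, v ∈ W)
    (hconn : ∀ u ∈ W, ∀ v ∈ W, Relation.EqvGen (G.PAdj Q) u v)
    (hCQ : C ⊆ Q) (hC : C.Nonempty) (hcyc : G.IsCyclic C) : W.card ≤ Q.card := by
  have h₁ := (G.exists_isCyclic_iff Q).1 ⟨C, hCQ, hC, hcyc⟩
  have h₂ := G.card_compV_le hQ hconn
  have h₃ : W.card ≤ Fintype.card G.V := card_le_univ W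
  omega

lemma eqvGen_fiberE {P : Finset G.E} {x : G.CompV P} {u v : G.V}
    (hu : Quot.mk (G.PAdj P) u = x) (hv : Quot.mk (G.PAdj P) v = x) :
    Relation.EqvGen (G.PAdj (G.fiberE P x)) u v := by
  refine G.eqvGen_of_closed (W := G.fiberV P x) (fun e he a ha b hb haW => ?_)
    (fun e he h => G.mem_fiberE.2 ⟨he, fun w hw => G.mem_fiberV.1 (h w hw)⟩)
    (Quot.eqvGen_exact (hu.trans hv.symm)) (G.mem_fiberV.2 hu)
  rw [G.mem_fiberV] at haW ⊢
  rw [G.mk_eq_of_mem_ends he hb ha, haW]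

lemma isCyclic_fiberE {P : Finset G.E} (hP : G.IsCyclic P) (x : G.CompV P) :
    G.IsCyclic (G.fiberE P x) := by
  rw [isCyclic_iff] at hP ⊢
  intro v
  by_cases hv : Quot.mk (G.PAdj P) v = x
  · rw [← hP v]
    refine sum_subset (filter_subset _ _) fun e he hex => ?_
    rw [G.degMul_eq_zero fun hve => hex (hv ▸ G.mem_fiberE_of_mem_ends he hve), Nat.cast_zero]
  · refine sum_eq_zero fun e he => ?_
    rw [G.degMul_eq_zero fun hve => hv ((G.mem_fiberE.1 he).2 v hve), Nat.cast_zero]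

lemma quotWeight_pos_of_mem_fiberE {P : Finset G.E} (hP : G.IsCyclic P) {x : G.CompV P}
    {e : G.E} (he : e ∈ G.fiberE P x) : 0 < G.quotWeight P x := by
  have := G.card_le_card_of_isCyclic (C := G.fiberE P x)
    (fun e he v hv => G.mem_fiberV.2 ((G.mem_fiberE.1 he).2 v hv))
    (fun u hu v hv => G.eqvGen_fiberE (G.mem_fiberV.1 hu) (G.mem_fiberV.1 hv))
    subset_rfl ⟨e, he⟩ (G.isCyclic_fiberE hP x)
  unfold quotWeight
  omega

lemma quotWeight_pos_of_w_pos {P : Finset G.E} {v : G.V} (hw : 0 < G.w v) :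
    0 < G.quotWeight P (Quot.mk (G.PAdj P) v) := by
  have := single_le_sum (f := G.w) (fun _ _ => Nat.zero_le _) (G.mem_fiberV.2 rfl : v ∈ G.fiberV P _)
  unfold quotWeight
  omega

lemma exists_quotWeight_pos (hg : 0 < G.genus) :
    ∃ P, G.IsCyclic P ∧ ∃ x, 0 < G.quotWeight P x := by
  by_cases hw : ∃ v, 0 < G.w v
  · obtain ⟨v, hv⟩ := hw
    exact ⟨∅, G.isCyclic_empty, _, G.quotWeight_pos_of_w_pos hv⟩
  · push Not at hw
    have hw0 : ∑ v, G.w v = 0 := sum_eq_zero fun v _ => Nat.le_zero.1 (hw v)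
    have hb : Fintype.card G.V < (univ : Finset G.E).card + Nat.card (G.CompV univ) := by
      simp only [genus, b1, numComp, hw0, card_univ] at hg ⊢
      omega
    obtain ⟨C, -, ⟨e, he⟩, hC⟩ := (G.exists_isCyclic_iff univ).2 hb
    exact ⟨C, hC, _, G.quotWeight_pos_of_mem_fiberE hC
      (G.mem_fiberE_of_mem_ends he (Sym2.out_fst_mem _))⟩

end LegGraph

namespace Contraction

variable {G G' : LegGraph} (γ : Contraction G G')

def fiber (v' : G'.V) : Finset G.V := univ.filter fun v => γ.vMap v = v'

def fiberEdges (v' : G'.V) : Finset G.E := γ.F.filter fun e => ∀ u ∈ G.ends e, γ.vMap u = v'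

variable {γ} in
lemma mem_fiber {v : G.V} {v' : G'.V} : v ∈ γ.fiber v' ↔ γ.vMap v = v' := by
  simp [fiber]

variable {γ} in
lemma mem_fiberEdges {e : G.E} {v' : G'.V} :
    e ∈ γ.fiberEdges v' ↔ e ∈ γ.F ∧ ∀ u ∈ G.ends e, γ.vMap u = v' := by
  simp [fiberEdges]

lemma w_eq (v' : G'.V) :
    G'.w v' = ∑ v ∈ γ.fiber v', G.w v + ((γ.fiberEdges v').card + 1 - (γ.fiber v').card) :=
  γ.w_compat v'

lemma w_le_w_vMap (v : G.V) : G.w v ≤ G'.w (γ.vMap v) := by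
  have := single_le_sum (f := G.w) (fun _ _ => Nat.zero_le _) (mem_fiber.2 rfl : v ∈ γ.fiber _)
  rw [γ.w_eq]
  omega

lemma vMap_eq_of_eqvGen {Q : Finset G.E} (hQ : Q ⊆ γ.F) {u v : G.V}
    (h : Relation.EqvGen (G.PAdj Q) u v) : γ.vMap u = γ.vMap v := by
  have hequiv : Equivalence fun a b => γ.vMap a = γ.vMap b := ⟨fun _ => rfl, Eq.symm, Eq.trans⟩
  refine hequiv.eqvGen_iff.1 (Relation.EqvGen.mono (fun a b hab => ?_) u v h)
  obtain ⟨e, he, ha, hb⟩ := hab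
  exact γ.collapse e (hQ he) a ha b hb

lemma eqvGen_fiberEdges {u v : G.V} {v' : G'.V} (hu : γ.vMap u = v') (hv : γ.vMap v = v') :
    Relation.EqvGen (G.PAdj (γ.fiberEdges v')) u v :=
  G.eqvGen_of_closed (W := γ.fiber v')
    (fun e he a ha b hb haW => mem_fiber.2 ((γ.collapse e he b hb a ha).trans (mem_fiber.1 haW)))
    (fun _ he h => mem_fiberEdges.2 ⟨he, fun w hw => mem_fiber.1 (h w hw)⟩)
    (γ.fiber_conn u v (hu.trans hv.symm)) (mem_fiber.2 hu)

lemma w_pos_of_isCyclic {v' : G'.V} {C : Finset G.E} (hC : C ⊆ γ.fiberEdges v')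
    (hne : C.Nonempty) (hcyc : G.IsCyclic C) : 0 < G'.w v' := by
  have := G.card_le_card_of_isCyclic (W := γ.fiber v')
    (fun e he u hu => mem_fiber.2 ((mem_fiberEdges.1 he).2 u hu))
    (fun u hu v hv => γ.eqvGen_fiberEdges (mem_fiber.1 hu) (mem_fiber.1 hv)) hC hne hcyc
  rw [γ.w_eq]
  omega

variable {γ} in
lemma mem_pushE {P : Finset G.E} {e' : G'.E} : e' ∈ γ.pushE P ↔ (γ.eEquiv e').1 ∈ P := by
  simp [pushE]

lemma indicator_pushE (P : Finset G.E) :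
    G'.indicator (γ.pushE P) = γ.eStar (G.indicator P) :=
  funext fun e' => by simp [LegGraph.indicator, eStar, mem_pushE]

lemma sum_fiber_degMul_of_mem_F {e : G.E} (he : e ∈ γ.F) (v' : G'.V) :
    ∑ v ∈ γ.fiber v', (G.degMul v e : ZMod 2) = 0 :=
  G.sum_degMul_eq_zero fun u hu v hv huS =>
    mem_fiber.2 ((γ.collapse e he v hv u hu).trans (mem_fiber.1 huS))

lemma sum_fiber_degMul_eEquiv (v' : G'.V) (e' : G'.E) :
    ∑ v ∈ γ.fiber v', (G.degMul v (γ.eEquiv e').1 : ZMod 2) = G'.degMul v' e' := by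
  obtain ⟨a, b, hab⟩ := G.exists_ends_eq (γ.eEquiv e').1
  rw [G.sum_degMul_of_ends_eq hab,
    G'.degMul_of_ends_eq (by rw [γ.ends_compat, hab, Sym2.map_mk])]
  simp [mem_fiber]

lemma boundary_comp_eStar : G'.boundary ∘ₗ γ.eStar = γ.vStar ∘ₗ G.boundary := by
  refine LinearMap.ext fun y => funext fun v' => ?_
  change ∑ e', y (γ.eEquiv e').1 * (G'.degMul v' e' : ZMod 2)
    = ∑ v ∈ γ.fiber v', ∑ e, y e * (G.degMul v e : ZMod 2)
  symm
  rw [sum_comm]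
  simp_rw [← mul_sum]
  rw [← Fintype.sum_subtype_add_sum_subtype (· ∈ γ.F), sum_eq_zero fun e _ => by rw [γ.sum_fiber_degMul_of_mem_F e.2, mul_zero], zero_add,
    ← γ.eEquiv.sum_comp]
  simp_rw [γ.sum_fiber_degMul_eEquiv]

lemma isCyclic_pushE {P : Finset G.E} (hP : G.IsCyclic P) : G'.IsCyclic (γ.pushE P) := by
  rw [LegGraph.IsCyclic, indicator_pushE, ← LinearMap.comp_apply, boundary_comp_eStar,
    LinearMap.comp_apply, hP, map_zero]

/-- The map `γ̄ : V(G/P) → V(G'/γ_* P)` induced on components. -/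
def compMap (P : Finset G.E) : G.CompV P → G'.CompV (γ.pushE P) :=
  Quot.lift (fun v => Quot.mk _ (γ.vMap v)) fun u v ⟨e, heP, hu, hv⟩ => by
    by_cases heF : e ∈ γ.F
    · rw [γ.collapse e heF u hu v hv]
    · have hends := γ.ends_compat (γ.eEquiv.symm ⟨e, heF⟩)
      rw [Equiv.apply_symm_apply] at hends
      exact G'.mk_eq_of_mem_ends (mem_pushE.2 (by rwa [Equiv.apply_symm_apply]))
        (hends ▸ Sym2.mem_map.2 ⟨u, hu, rfl⟩) (hends ▸ Sym2.mem_map.2 ⟨v, hv, rfl⟩)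

lemma compMap_mk (P : Finset G.E) (v : G.V) :
    γ.compMap P (Quot.mk _ v) = Quot.mk _ (γ.vMap v) := rfl

lemma compMapsTo_iff {P : Finset G.E} {x : G.CompV P} {x' : G'.CompV (γ.pushE P)} :
    γ.compMapsTo P (γ.pushE P) x x' ↔ γ.compMap P x = x' := by
  constructor
  · rintro ⟨v, rfl, rfl⟩
    rfl
  · rintro rfl
    obtain ⟨v, rfl⟩ := Quot.exists_rep x
    exact ⟨v, rfl, rfl⟩

lemma pushS_apply (P : Finset G.E) (s : G.CompV P → ZMod 2) (x' : G'.CompV (γ.pushE P)) :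
    γ.pushS P s x' = ∑ x with γ.compMap P x = x', s x := by
  rw [pushS]
  congr 1
  ext x
  simp [compMapsTo_iff]

lemma sum_pushS (P : Finset G.E) (s : G.CompV P → ZMod 2) :
    ∑ x', γ.pushS P s x' = ∑ x, s x := by
  simp_rw [pushS_apply]
  exact sum_fiberwise univ (γ.compMap P) s

lemma pushS_zero (P : Finset G.E) : γ.pushS P 0 = 0 :=
  funext fun _ => sum_const_zero

lemma pushS_single (P : Finset G.E) (x : G.CompV P) :
    γ.pushS P (Pi.single x 1) = Pi.single (γ.compMap P x) 1 := by
  funext x'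
  rw [pushS_apply, sum_pi_single']
  simp [Pi.single_apply, eq_comm]

lemma eEquiv_symm_mem_fiberE {P : Finset G.E} {x : G.CompV P} {e : G.E}
    (he : e ∈ G.fiberE P x) (heF : e ∉ γ.F) :
    γ.eEquiv.symm ⟨e, heF⟩ ∈ G'.fiberE (γ.pushE P) (γ.compMap P x) := by
  have hends := γ.ends_compat (γ.eEquiv.symm ⟨e, heF⟩)
  rw [Equiv.apply_symm_apply] at hends
  refine G'.mem_fiberE.2 ⟨mem_pushE.2 ?_, fun w hw => ?_⟩
  · rw [Equiv.apply_symm_apply]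
    exact (G.mem_fiberE.1 he).1
  · obtain ⟨u, hu, rfl⟩ := Sym2.mem_map.1 (hends ▸ hw)
    rw [← γ.compMap_mk, (G.mem_fiberE.1 he).2 u hu]

/-- The genus of a component can only grow under contraction: its weight is
pushed to a vertex of the image, and a cycle in it either survives in
`γ_* P` or is contracted to a single vertex, which then has positive weight. -/
lemma quotWeight_compMap_pos {P : Finset G.E} (hP : G.IsCyclic P) {x : G.CompV P}
    (hx : 0 < G.quotWeight P x) : 0 < G'.quotWeight (γ.pushE P) (γ.compMap P x) := by
  obtain ⟨v₀, rfl⟩ := Quot.exists_rep x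
  by_cases hw : ∃ v ∈ G.fiberV P (Quot.mk _ v₀), 0 < G.w v
  · obtain ⟨v, hv, hwv⟩ := hw
    rw [← G.mem_fiberV.1 hv]
    exact G'.quotWeight_pos_of_w_pos (hwv.trans_le (γ.w_le_w_vMap v))
  push Not at hw
  have hcycle : (G.fiberE P (Quot.mk _ v₀)).Nonempty := by
    have hV : 0 < (G.fiberV P (Quot.mk _ v₀)).card := card_pos.2 ⟨v₀, G.mem_fiberV.2 rfl⟩
    have hW : ∑ v ∈ G.fiberV P (Quot.mk _ v₀), G.w v = 0 :=
      sum_eq_zero fun v hv => Nat.le_zero.1 (hw v hv)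
    unfold LegGraph.quotWeight at hx
    rw [hW] at hx
    exact card_pos.1 (by omega)
  by_cases hF : ∃ e ∈ G.fiberE P (Quot.mk _ v₀), e ∉ γ.F
  · obtain ⟨e, he, heF⟩ := hF
    exact G'.quotWeight_pos_of_mem_fiberE (γ.isCyclic_pushE hP) (γ.eEquiv_symm_mem_fiberE he heF)
  · push Not at hF
    refine G'.quotWeight_pos_of_w_pos (γ.w_pos_of_isCyclic (fun e he => ?_) hcycle
      (G.isCyclic_fiberE hP _))
    exact mem_fiberEdges.2 ⟨hF e he, fun u hu =>
      γ.vMap_eq_of_eqvGen hF (G.eqvGen_fiberE ((G.mem_fiberE.1 he).2 u hu) rfl)⟩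

end Contraction

lemma Contraction.exists_spinMapsTo {G G' : LegGraph} (γ : Contraction G G') (σ : SpinStructure G)
    (hvan : ∀ x', G'.quotWeight (γ.pushE σ.P) x' = 0 → γ.pushS σ.P σ.s x' = 0) :
    ∃ σ', γ.SpinMapsTo σ σ' :=
  ⟨⟨_, γ.isCyclic_pushE σ.cyclic, _, hvan⟩, rfl, HEq.rfl⟩

lemma Contraction.SpinMapsTo.parity_eq {G G' : LegGraph} {γ : Contraction G G'}
    {σ : SpinStructure G} {σ' : SpinStructure G'} (h : γ.SpinMapsTo σ σ') :
    σ'.parity = σ.parity := by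
  obtain ⟨P', hP', s', hs'⟩ := σ'
  obtain ⟨rfl, hs⟩ := h
  cases eq_of_heq hs
  exact γ.sum_pushS σ.P σ.s

namespace SpinStructure

variable {G : LegGraph}

def HasPushforwards (σ : SpinStructure G) : Prop :=
  ∀ (G' : LegGraph) (γ : Contraction G G'), ∃ σ', γ.SpinMapsTo σ σ'

def zero (P : Finset G.E) (hP : G.IsCyclic P) : SpinStructure G :=
  ⟨P, hP, 0, fun _ _ => rfl⟩

def single (P : Finset G.E) (hP : G.IsCyclic P) (x : G.CompV P)
    (hx : 0 < G.quotWeight P x) : SpinStructure G :=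
  ⟨P, hP, Pi.single x 1, fun _ hx' => Pi.single_eq_of_ne (by rintro rfl; omega) _⟩

lemma parity_zero (P : Finset G.E) (hP : G.IsCyclic P) : (zero P hP).parity = 0 :=
  sum_const_zero

lemma parity_single (P : Finset G.E) (hP : G.IsCyclic P) (x : G.CompV P)
    (hx : 0 < G.quotWeight P x) : (single P hP x hx).parity = 1 := by
  simp [parity, single]
  exact mem_univ x

lemma hasPushforwards_zero (P : Finset G.E) (hP : G.IsCyclic P) :
    (zero P hP).HasPushforwards := fun _ γ =>
  γ.exists_spinMapsTo _ fun x' _ => congrFun (γ.pushS_zero P) x'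

lemma hasPushforwards_single (P : Finset G.E) (hP : G.IsCyclic P) (x : G.CompV P)
    (hx : 0 < G.quotWeight P x) : (single P hP x hx).HasPushforwards := fun _ γ =>
  γ.exists_spinMapsTo _ fun x' hx' => by
    change γ.pushS P (Pi.single x 1) x' = 0
    rw [γ.pushS_single]
    exact Pi.single_eq_of_ne (by rintro rfl; exact (γ.quotWeight_compMap_pos hP hx).ne' hx') _

lemma exists_parity_one_hasPushforwards (hg : 0 < G.genus) :
    ∃ σ : SpinStructure G, σ.parity = 1 ∧ σ.HasPushforwards := by
  obtain ⟨P, hP, x, hx⟩ := G.exists_quotWeight_pos hg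
  exact ⟨single P hP x hx, parity_single P hP x hx, hasPushforwards_single P hP x hx⟩

end SpinStructure

lemma isPosetQuotient_spinObj_cycObj (g n : ℕ) :
    IsPosetQuotient
      (fun x y : {x : SpinObj // StG g n x.1 ∧ x.2.parity = 0} => SpinGe x.1 y.1)
      (fun x y : {x : CycObj // StG g n x.1 ∧ x.1.IsCyclic x.2} => CycGe x.1 y.1)
      (fun x => ⟨⟨x.1.1, x.1.2.P⟩, x.2.1, x.1.2.cyclic⟩) := by
  refine ⟨fun ⟨⟨G, P⟩, hG, hP⟩ => ⟨⟨⟨G, .zero P hP⟩, hG, SpinStructure.parity_zero P hP⟩, rfl⟩,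
    fun _ _ ⟨γ, hγ⟩ => ⟨γ, hγ.1.symm⟩, ?_⟩
  intro ⟨⟨G, P⟩, hG, hP⟩ ⟨⟨G', P'⟩, hG', _⟩ ⟨γ, hγ⟩
  obtain ⟨σ', hσ'⟩ := SpinStructure.hasPushforwards_zero P hP G' γ
  exact ⟨⟨⟨G, .zero P hP⟩, hG, SpinStructure.parity_zero P hP⟩,
    ⟨⟨G', σ'⟩, hG', hσ'.parity_eq.trans (SpinStructure.parity_zero P hP)⟩,
    rfl, Subtype.ext (Sigma.ext rfl (heq_of_eq (hσ'.1.trans hγ))), γ, hσ'⟩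

lemma isPosetQuotient_spinObj_graph {g n : ℕ} {c : ZMod 2}
    (h : ∀ G, StG g n G → ∃ σ : SpinStructure G, σ.parity = c ∧ σ.HasPushforwards) :
    IsPosetQuotient
      (fun x y : {x : SpinObj // StG g n x.1 ∧ x.2.parity = c} => SpinGe x.1 y.1)
      (fun X Y : {H : LegGraph // StG g n H} => GraphGe X.1 Y.1)
      (fun x => ⟨x.1.1, x.2.1⟩) := by
  refine ⟨fun ⟨G, hG⟩ => ?_, fun _ _ ⟨γ, _⟩ => ⟨γ⟩, fun ⟨G, hG⟩ ⟨G', hG'⟩ ⟨γ⟩ => ?_⟩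
  · obtain ⟨σ, hσ, -⟩ := h G hG
    exact ⟨⟨⟨G, σ⟩, hG, hσ⟩, rfl⟩
  · obtain ⟨σ, hσ, hpush⟩ := h G hG
    obtain ⟨σ', hσ'⟩ := hpush G' γ
    exact ⟨⟨⟨G, σ⟩, hG, hσ⟩, ⟨⟨G', σ'⟩, hG', hσ'.parity_eq.trans hσ⟩, rfl, rfl, γ, hσ'⟩

theorem spin_forgetful_maps_are_poset_quotients_general (g n : ℕ) :
    IsPosetQuotient
      (fun x y : {x : SpinObj // StG g n x.1 ∧ x.2.parity = 0} =>
        SpinGe x.1 y.1)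
      (fun x y : {x : CycObj // StG g n x.1 ∧ x.1.IsCyclic x.2} =>
        CycGe x.1 y.1)
      (fun x => ⟨⟨x.1.1, x.1.2.P⟩, x.2.1, x.1.2.cyclic⟩) ∧
    IsPosetQuotient
      (fun x y : {x : SpinObj // StG g n x.1 ∧ x.2.parity = 0} =>
        SpinGe x.1 y.1)
      (fun X Y : {H : LegGraph // StG g n H} => GraphGe X.1 Y.1)
      (fun x => ⟨x.1.1, x.2.1⟩) ∧
    (0 < g →
      IsPosetQuotient
        (fun x y : {x : SpinObj // StG g n x.1 ∧ x.2.parity = 1} =>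
          SpinGe x.1 y.1)
        (fun X Y : {H : LegGraph // StG g n H} => GraphGe X.1 Y.1)
        (fun x => ⟨x.1.1, x.2.1⟩)) :=
  ⟨isPosetQuotient_spinObj_cycObj g n,
    isPosetQuotient_spinObj_graph fun G _ => ⟨_, SpinStructure.parity_zero ∅ G.isCyclic_empty,
      SpinStructure.hasPushforwards_zero ∅ G.isCyclic_empty⟩,
    fun hg => isPosetQuotient_spinObj_graph fun _ hG =>
      SpinStructure.exists_parity_one_hasPushforwards (hG.2.1 ▸ hg)⟩

/-- Assume `2g − 2 + n > 0`.  The forgetful maps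
`SP⁺_{g,n} → C_{g,n}`, `(G,P,s) ↦ (G,P)`, and `SP⁺_{g,n} → S_{g,n}`,
`(G,P,s) ↦ G`, are quotients of posets for every `g`; and for `g > 0` the
forgetful map `SP⁻_{g,n} → S_{g,n}` is a quotient of posets. -/
theorem spin_forgetful_maps_are_poset_quotients (g n : ℕ)
    (h : 2 < 2 * g + n) :
    IsPosetQuotient
      (fun x y : {x : SpinObj // StG g n x.1 ∧ x.2.parity = 0} =>
        SpinGe x.1 y.1)
      (fun x y : {x : CycObj // StG g n x.1 ∧ x.1.IsCyclic x.2} =>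
        CycGe x.1 y.1)
      (fun x => ⟨⟨x.1.1, x.1.2.P⟩, x.2.1, x.1.2.cyclic⟩) ∧
    IsPosetQuotient
      (fun x y : {x : SpinObj // StG g n x.1 ∧ x.2.parity = 0} =>
        SpinGe x.1 y.1)
      (fun X Y : {H : LegGraph // StG g n H} => GraphGe X.1 Y.1)
      (fun x => ⟨x.1.1, x.2.1⟩) ∧
    (0 < g →
      IsPosetQuotient
        (fun x y : {x : SpinObj // StG g n x.1 ∧ x.2.parity = 1} =>
          SpinGe x.1 y.1)
        (fun X Y : {H : LegGraph // StG g n H} => GraphGe X.1 Y.1)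
        (fun x => ⟨x.1.1, x.2.1⟩)) :=
  spin_forgetful_maps_are_poset_quotients_general g n

end
end

section
/- Let Γ = (G,ℓ) be an extended tropical curve of genus g with n legs, with G stable. Then the set of isomorphism classes of extended spin tropical curves (Γ',P,s), with Γ' = (G,ℓ') having the same underlying graph G, such that the extended tropical curve (G, π^trop(ℓ')) is isomorphic to Γ — where π^trop(ℓ')(e) = 2ℓ'(e) for e ∈ E ∖ P and π^trop(ℓ')(e) = ℓ'(e) for e ∈ P — is in bijection with the quotient S^trop_Γ / Aut(Γ) of the set of spin structures on Γ by the action of the automorphism group of Γ. -/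
/-!
Common combinatorial preliminaries: weighted graphs with legs, contractions,
spin structures, following Caporaso–Melo–Pacini, "Tropicalizing the moduli
space of spin curves".
-/

attribute [local instance] Classical.propDecidable

noncomputable section

/-- The length function of `π^trop` applied to a spin tropical curve with
spin cycle `P`: edges outside `P` have their length doubled. -/
def piTropLen (G : LegGraph) (P : Finset G.E) (ℓ : G.E → ENNReal) :
    G.E → ENNReal :=
  fun e => if e ∈ P then ℓ e else 2 * ℓ e

/-! π^trop is invertible once `P` is fixed: halving the lengths outside `P` undoes it. Hence every
spin curve in the fibre over `Γ = (G, ℓ)` is isomorphic to one of the form `(halfLen P ℓ, (P, s))`,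
and two curves of this form are isomorphic exactly when an automorphism preserving `ℓ` carries one
spin structure to the other. That automorphisms act on spin structures at all rests on their
preserving the cycle space and the genera of the components of `(V, P)`. -/

theorem Quot.map_bijective_of_iff {α β : Type*} {r : α → α → Prop} {s : β → β → Prop}
    (hs : Equivalence s) (f : α → β) (hf : ∀ a a', s (f a) (f a') ↔ r a a')
    (hsurj : ∀ b, ∃ a, s b (f a)) :
    Function.Bijective (Quot.map f fun a a' => (hf a a').2) := by
  constructor
  · rintro ⟨a⟩ ⟨a'⟩ h
    have h' : Relation.EqvGen s (f a) (f a') := Quot.eq.1 (h : Quot.mk s (f a) = Quot.mk s (f a'))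
    exact Quot.sound ((hf a a').1 (hs.eqvGen_iff.1 h'))
  · rintro ⟨b⟩
    obtain ⟨a, hab⟩ := hsurj b
    exact ⟨Quot.mk r a, (Quot.sound hab).symm⟩

namespace GraphAut

variable {G : LegGraph}

@[simps]
def refl (G : LegGraph) : GraphAut G where
  vE := Equiv.refl _
  eE := Equiv.refl _
  ends_compat _ := by simp
  w_compat _ := rfl
  leg_fix _ := rfl

@[simps]
def symm (α : GraphAut G) : GraphAut G where
  vE := α.vE.symm
  eE := α.eE.symm
  ends_compat e := by
    conv_rhs => rw [← α.eE.apply_symm_apply e, α.ends_compat, Sym2.map_map,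
      α.vE.symm_comp_self, Sym2.map_id, id]
  w_compat v := by rw [← α.w_compat, Equiv.apply_symm_apply]
  leg_fix l := by rw [eq_comm, Equiv.symm_apply_eq, ← α.leg_fix]

variable (α : GraphAut G)

theorem apply_mem_ends_iff {v : G.V} {e : G.E} :
    α.vE v ∈ G.ends (α.eE e) ↔ v ∈ G.ends e := by
  simp [α.ends_compat, Sym2.mem_map, α.vE.injective.eq_iff]

theorem degMul_apply (v : G.V) (e : G.E) : G.degMul (α.vE v) (α.eE e) = G.degMul v e := by
  unfold LegGraph.degMul
  rw [α.ends_compat]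
  induction G.ends e using Sym2.inductionOn with
  | hf a b => simp [α.vE.injective.eq_iff]

theorem isCyclic_image {P : Finset G.E} (h : G.IsCyclic P) : G.IsCyclic (P.image α.eE) := by
  funext v
  obtain ⟨u, rfl⟩ := α.vE.surjective v
  have hu : G.boundary (G.indicator P) u = 0 := congrFun h u
  rw [Pi.zero_apply, ← hu]
  simp only [LegGraph.boundary, LinearMap.coe_mk, AddHom.coe_mk, LegGraph.indicator]
  rw [← α.eE.sum_comp]
  simp only [α.degMul_apply, α.eE.injective.mem_finset_image]

theorem pAdj_image_iff (P : Finset G.E) {u v : G.V} :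
    G.PAdj (P.image α.eE) (α.vE u) (α.vE v) ↔ G.PAdj P u v := by
  simp only [LegGraph.PAdj, Finset.exists_mem_image, α.apply_mem_ends_iff]

/-- The isomorphism `G/P ≅ G/α(P)` induced by `α` on contracted vertices. -/
def compEquiv (P : Finset G.E) : G.CompV P ≃ G.CompV (P.image α.eE) :=
  Quot.congr α.vE fun _ _ => (α.pAdj_image_iff P).symm

theorem compEquiv_mk (P : Finset G.E) (u : G.V) :
    α.compEquiv P (Quot.mk _ u) = Quot.mk _ (α.vE u) :=
  Quot.congr_mk _ _ _

theorem mk_eq_compEquiv_iff (P : Finset G.E) (u : G.V) (x : G.CompV P) :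
    Quot.mk (G.PAdj (P.image α.eE)) (α.vE u) = α.compEquiv P x ↔ Quot.mk _ u = x := by
  have h := (α.compEquiv P).apply_eq_iff_eq (x := Quot.mk _ u) (y := x)
  rwa [compEquiv_mk] at h

theorem fiberV_compEquiv (P : Finset G.E) (x : G.CompV P) :
    G.fiberV (P.image α.eE) (α.compEquiv P x) = (G.fiberV P x).map α.vE.toEmbedding := by
  ext v
  obtain ⟨u, rfl⟩ := α.vE.surjective v
  simp [LegGraph.fiberV, mk_eq_compEquiv_iff]

theorem fiberE_compEquiv (P : Finset G.E) (x : G.CompV P) :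
    G.fiberE (P.image α.eE) (α.compEquiv P x) = (G.fiberE P x).map α.eE.toEmbedding := by
  ext e
  obtain ⟨e, rfl⟩ := α.eE.surjective e
  simp [LegGraph.fiberE, α.eE.injective.mem_finset_image, α.ends_compat,
    Sym2.mem_map, mk_eq_compEquiv_iff]

theorem quotWeight_compEquiv (P : Finset G.E) (x : G.CompV P) :
    G.quotWeight (P.image α.eE) (α.compEquiv P x) = G.quotWeight P x := by
  simp only [LegGraph.quotWeight, fiberV_compEquiv, fiberE_compEquiv, Finset.sum_map,
    Finset.card_map, Equiv.coe_toEmbedding, α.w_compat]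

def mapSpin (σ : SpinStructure G) : SpinStructure G where
  P := σ.P.image α.eE
  cyclic := α.isCyclic_image σ.cyclic
  s := σ.s ∘ (α.compEquiv σ.P).symm
  vanish x hx := by
    obtain ⟨y, rfl⟩ := (α.compEquiv σ.P).surjective x
    rw [quotWeight_compEquiv] at hx
    simpa using σ.vanish y hx

theorem spinMapsTo_mapSpin (σ : SpinStructure G) : α.SpinMapsTo σ (α.mapSpin σ) :=
  ⟨rfl, fun v => by
    change σ.s ((α.compEquiv σ.P).symm (Quot.mk (G.PAdj (σ.P.image α.eE)) (α.vE v))) = _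
    rw [← compEquiv_mk]
    exact congrArg σ.s ((α.compEquiv σ.P).symm_apply_apply _)⟩

theorem spinMapsTo_refl (σ : SpinStructure G) : (refl G).SpinMapsTo σ σ :=
  ⟨by simp, fun _ => rfl⟩

variable {α}

theorem SpinMapsTo.symm {σ σ' : SpinStructure G} (h : α.SpinMapsTo σ σ') :
    α.symm.SpinMapsTo σ' σ := by
  refine ⟨by simp [h.1, Finset.image_image], fun v => ?_⟩
  obtain ⟨u, rfl⟩ := α.vE.surjective v
  rw [symm_vE, Equiv.symm_apply_apply]
  exact (h.2 u).symm

theorem SpinMapsTo.trans {β : GraphAut G} {σ σ' σ'' : SpinStructure G}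
    (h₁ : α.SpinMapsTo σ σ') (h₂ : β.SpinMapsTo σ' σ'') : (β.comp α).SpinMapsTo σ σ'' :=
  ⟨by rw [h₂.1, h₁.1, Finset.image_image]; rfl, fun v => (h₂.2 (α.vE v)).trans (h₁.2 v)⟩

end GraphAut

section Lengths

variable {G : LegGraph}

def halfLen (P : Finset G.E) (ℓ : G.E → ENNReal) : G.E → ENNReal :=
  fun e => if e ∈ P then ℓ e else ℓ e / 2

theorem piTropLen_halfLen (P : Finset G.E) (ℓ : G.E → ENNReal) :
    piTropLen G P (halfLen P ℓ) = ℓ := by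
  funext e
  by_cases he : e ∈ P <;> simp [piTropLen, halfLen, he, ENNReal.mul_div_cancel]

theorem halfLen_piTropLen (P : Finset G.E) (ℓ : G.E → ENNReal) :
    halfLen P (piTropLen G P ℓ) = ℓ := by
  funext e
  by_cases he : e ∈ P
  · simp [piTropLen, halfLen, he]
  · simp only [piTropLen, halfLen, he, if_false]
    rw [mul_comm, ENNReal.mul_div_cancel_right two_ne_zero ENNReal.ofNat_ne_top]

theorem piTropLen_apply_of_eq_image (α : GraphAut G) {P P' : Finset G.E}
    (hP : P' = P.image α.eE) (ℓ : G.E → ENNReal) (e : G.E) :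
    piTropLen G P' ℓ (α.eE e) = piTropLen G P (ℓ ∘ α.eE) e := by
  simp [piTropLen, hP, α.eE.injective.mem_finset_image]

theorem halfLen_apply_of_eq_image (α : GraphAut G) {P P' : Finset G.E}
    (hP : P' = P.image α.eE) (ℓ : G.E → ENNReal) (e : G.E) :
    halfLen P' ℓ (α.eE e) = halfLen P (ℓ ∘ α.eE) e := by
  simp [halfLen, hP, α.eE.injective.mem_finset_image]

end Lengths

section Fiber

variable {G : LegGraph}

/-- Spin curves `(G, ℓ', P, s)` with `(G, π^trop ℓ') ≅ (G, ℓ)`. -/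
def PiTropFiber (G : LegGraph) (ℓ : G.E → ENNReal) : Type :=
  {p : (G.E → ENNReal) × SpinStructure G //
    ∃ α : GraphAut G, ∀ e, piTropLen G p.2.P p.1 (α.eE e) = ℓ e}

def SpinCurveIso (p q : (G.E → ENNReal) × SpinStructure G) : Prop :=
  ∃ α : GraphAut G, (∀ e, q.1 (α.eE e) = p.1 e) ∧ α.SpinMapsTo p.2 q.2

theorem spinCurveIso_equivalence : Equivalence (SpinCurveIso (G := G)) where
  refl _ := ⟨GraphAut.refl G, fun _ => rfl, GraphAut.spinMapsTo_refl _⟩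
  symm := by
    rintro _ _ ⟨α, hl, hs⟩
    exact ⟨α.symm, fun e => by simpa using (hl (α.eE.symm e)).symm, hs.symm⟩
  trans := by
    rintro _ _ _ ⟨α, hl₁, hs₁⟩ ⟨β, hl₂, hs₂⟩
    exact ⟨β.comp α, fun e => (hl₂ _).trans (hl₁ e), hs₁.trans hs₂⟩

def halfCurve (ℓ : G.E → ENNReal) (σ : SpinStructure G) : PiTropFiber G ℓ :=
  ⟨(halfLen σ.P ℓ, σ), GraphAut.refl G, fun e => by simp [piTropLen_halfLen]⟩

theorem spinCurveIso_halfCurve_iff (ℓ : G.E → ENNReal) (σ σ' : SpinStructure G) :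
    SpinCurveIso (halfCurve ℓ σ).1 (halfCurve ℓ σ').1 ↔
      ∃ α : GraphAut G, (∀ e, ℓ (α.eE e) = ℓ e) ∧ α.SpinMapsTo σ σ' := by
  constructor
  · rintro ⟨α, hl, hs⟩
    have hhalf : halfLen σ'.P ℓ ∘ α.eE = halfLen σ.P ℓ := funext hl
    have hP : σ'.P = σ.P.image α.eE := hs.1
    refine ⟨α, fun e => ?_, hs⟩
    calc ℓ (α.eE e) = piTropLen G σ'.P (halfLen σ'.P ℓ) (α.eE e) := by rw [piTropLen_halfLen]
      _ = piTropLen G σ.P (halfLen σ.P ℓ) e := by rw [piTropLen_apply_of_eq_image α hP, hhalf]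
      _ = ℓ e := by rw [piTropLen_halfLen]
  · rintro ⟨α, hl, hs⟩
    have hℓ : ℓ ∘ α.eE = ℓ := funext hl
    exact ⟨α, fun e => by simp only [halfCurve, halfLen_apply_of_eq_image α hs.1, hℓ], hs⟩

theorem exists_spinCurveIso_halfCurve {ℓ : G.E → ENNReal} (p : PiTropFiber G ℓ) :
    ∃ σ, SpinCurveIso p.1 (halfCurve ℓ σ).1 := by
  obtain ⟨⟨ℓ', σ⟩, w, hw⟩ := p
  have hℓ : ℓ ∘ w.symm.eE = piTropLen G σ.P ℓ' := by
    funext e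
    simpa using (hw (w.eE.symm e)).symm
  refine ⟨w.symm.mapSpin σ, w.symm, fun e => ?_, w.symm.spinMapsTo_mapSpin σ⟩
  change halfLen (σ.P.image w.symm.eE) ℓ (w.symm.eE e) = ℓ' e
  rw [halfLen_apply_of_eq_image w.symm rfl, hℓ, halfLen_piTropLen]

end Fiber

theorem pitrop_fiber_description_general (G : LegGraph)
    (ℓ : G.E → ENNReal) :
    Nonempty (
      Quot (fun p q : {p : (G.E → ENNReal) × SpinStructure G //
            ∃ α : GraphAut G, ∀ e, piTropLen G p.2.P p.1 (α.eE e) = ℓ e} =>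
          ∃ α : GraphAut G,
            (∀ e, q.1.1 (α.eE e) = p.1.1 e) ∧ α.SpinMapsTo p.1.2 q.1.2)
      ≃
      Quot (fun σ σ' : SpinStructure G =>
          ∃ α : GraphAut G,
            (∀ e, ℓ (α.eE e) = ℓ e) ∧ α.SpinMapsTo σ σ')) :=
  ⟨(Equiv.ofBijective _ (Quot.map_bijective_of_iff
    (spinCurveIso_equivalence.comap Subtype.val) (halfCurve ℓ)
    (spinCurveIso_halfCurve_iff ℓ) exists_spinCurveIso_halfCurve)).symm⟩

/-- Let `Γ = (G,ℓ)` be an extended tropical curve of genus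
`g` with `n` legs, `G` stable.  The set of isomorphism classes of extended
spin tropical curves `(Γ',P,s)` with `Γ' = (G,ℓ')` on the same underlying
graph `G`, such that `(G, π^trop(ℓ'))` is isomorphic to `Γ`, is in bijection
with `S^trop_Γ / Aut(Γ)`. -/
theorem pitrop_fiber_description (g n : ℕ) (G : LegGraph)
    (hst : G.Stable) (hgen : G.genus = g) (hn : G.numLegs = n)
    (ℓ : G.E → ENNReal) :
    Nonempty (
      Quot (fun p q : {p : (G.E → ENNReal) × SpinStructure G //
            ∃ α : GraphAut G, ∀ e, piTropLen G p.2.P p.1 (α.eE e) = ℓ e} =>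
          ∃ α : GraphAut G,
            (∀ e, q.1.1 (α.eE e) = p.1.1 e) ∧ α.SpinMapsTo p.1.2 q.1.2)
      ≃
      Quot (fun σ σ' : SpinStructure G =>
          ∃ α : GraphAut G,
            (∀ e, ℓ (α.eE e) = ℓ e) ∧ α.SpinMapsTo σ σ')) :=
  pitrop_fiber_description_general G ℓ

end
end
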